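/- arXiv:2209.00230 — 6 statements merged into one kernel-verified Lean document; each statement's English description precedes it below -/
import Mathlib

section
/- Let p, q be probability mass functions on a finite set D. If there exists a constant c ≥ 0 and, for each d, values m(d) = (p(d)+q(d))/2 such that |p(d) − q(d)| ≤ c · min(m(d), q(d)) ≤ c · q(d) for all d, then the Jensen–Shannon divergence JS(p‖q) ≤ (1/2) Σ_d |p(d) − q(d)| · |log(m(d)/q(d))| ≤ c²/2. -/
private lemma ptwise1 (p q : ℝ) (hp : 0 ≤ p) (hq : 0 < q) :
    p * Real.log (p / ((p + q) / 2)) + q * Real.log (q / ((p + q) / 2))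
      ≤ |p - q| * |Real.log (((p + q) / 2) / q)| := by
  set m := (p + q) / 2 with hm
  have hm0 : 0 < m := by positivity
  have key : p * Real.log (p / m) + q * Real.log (q / m)
      ≤ (p - q) * Real.log (m / q) := by
    rcases eq_or_lt_of_le hp with h0 | hp0
    · rw [Real.log_div hq.ne' hm0.ne', Real.log_div hm0.ne' hq.ne', ← h0]
      have : (0:ℝ) * Real.log (0 / m) = 0 := by simp
      nlinarith [this]
    · have hpq : p * q ≤ m ^ 2 := by nlinarith [sq_nonneg (p - q)]
      have hlog : Real.log p + Real.log q ≤ 2 * Real.log m := by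
        have h1 : Real.log (p * q) ≤ Real.log (m ^ 2) :=
          Real.log_le_log (by positivity) hpq
        rw [Real.log_mul hp0.ne' hq.ne', Real.log_pow] at h1
        push_cast at h1
        linarith
      rw [Real.log_div hp0.ne' hm0.ne', Real.log_div hq.ne' hm0.ne',
        Real.log_div hm0.ne' hq.ne']
      have h2 : p * (Real.log p + Real.log q - 2 * Real.log m) ≤ 0 :=
        mul_nonpos_of_nonneg_of_nonpos hp (by linarith)
      nlinarith [h2]
  calc p * Real.log (p / m) + q * Real.log (q / m)
      ≤ (p - q) * Real.log (m / q) := key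
    _ ≤ |(p - q) * Real.log (m / q)| := le_abs_self _
    _ = |p - q| * |Real.log (m / q)| := abs_mul _ _

private lemma ptwise2 (p q c : ℝ) (hp : 0 ≤ p) (hq : 0 < q) (hc : 0 ≤ c)
    (hb : |p - q| ≤ c * min ((p + q) / 2) q) :
    |p - q| * |Real.log (((p + q) / 2) / q)| ≤ c ^ 2 * q := by
  set m := (p + q) / 2 with hm
  have hm0 : 0 < m := by positivity
  rcases le_total q m with h | h
  · have habs1 : |p - q| = p - q := abs_of_nonneg (by simp only [hm] at h; linarith)
    have hb' : p - q ≤ c * q := by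
      rw [min_eq_right h, habs1] at hb; exact hb
    have habs2 : |Real.log (m / q)| = Real.log (m / q) :=
      abs_of_nonneg (Real.log_nonneg (by rw [le_div_iff₀ hq]; linarith))
    have h1 : Real.log (m / q) ≤ (m - q) / q := by
      have := Real.log_le_sub_one_of_pos (show 0 < m / q by positivity)
      have he : m / q - 1 = (m - q) / q := by field_simp
      linarith [he ▸ this]
    rw [habs1, habs2]
    have h2 : (p - q) * Real.log (m / q) ≤ (c * q) * ((m - q) / q) := by
      apply mul_le_mul hb' h1 (Real.log_nonneg (by rw [le_div_iff₀ hq]; linarith))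
      positivity
    have h3 : (c * q) * ((m - q) / q) = c * (m - q) := by field_simp
    have h4 : m - q = (p - q) / 2 := by rw [hm]; ring
    nlinarith [h2, h3, h4, hb', sq_nonneg c]
  · have habs1 : |p - q| = q - p := by rw [abs_of_nonpos (show p - q ≤ 0 by simp only [hm] at h; linarith)]; ring
    have hb' : q - p ≤ c * m := by
      rw [min_eq_left h, habs1] at hb; exact hb
    have habs2 : |Real.log (m / q)| = Real.log (q / m) := by
      rw [abs_of_nonpos, Real.log_div hm0.ne' hq.ne', Real.log_div hq.ne' hm0.ne']
      · ring
      · exact Real.log_nonpos (by positivity) (by rw [div_le_one hq]; linarith)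
    have h1 : Real.log (q / m) ≤ (q - m) / m := by
      have := Real.log_le_sub_one_of_pos (show 0 < q / m by positivity)
      have he : q / m - 1 = (q - m) / m := by field_simp
      linarith [he ▸ this]
    rw [habs1, habs2]
    have h2 : (q - p) * Real.log (q / m) ≤ (c * m) * ((q - m) / m) := by
      apply mul_le_mul hb' h1 (Real.log_nonneg (by rw [le_div_iff₀ hm0]; linarith))
      positivity
    have h3 : (c * m) * ((q - m) / m) = c * (q - m) := by field_simp
    have h4 : q - m = (q - p) / 2 := by rw [hm]; ring
    nlinarith [h2, h3, h4, hb', sq_nonneg c, hm0.le, h]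

theorem js_le_half_sum_le_csq {D : Type*} [Fintype D] (p q : D → ℝ) (c : ℝ)
    (hp : ∀ d, 0 ≤ p d) (hq : ∀ d, 0 < q d)
    (hp1 : ∑ d, p d = 1) (hq1 : ∑ d, q d = 1)
    (hc : 0 ≤ c)
    (hbound : ∀ d, |p d - q d| ≤ c * min ((p d + q d) / 2) (q d)) :
    ((1 / 2) * ∑ d, p d * Real.log (p d / ((p d + q d) / 2))
      + (1 / 2) * ∑ d, q d * Real.log (q d / ((p d + q d) / 2)))
      ≤ (1 / 2) * ∑ d, |p d - q d| * |Real.log (((p d + q d) / 2) / q d)|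
    ∧ (1 / 2) * ∑ d, |p d - q d| * |Real.log (((p d + q d) / 2) / q d)| ≤ c ^ 2 / 2 := by
  constructor
  · rw [← mul_add, ← Finset.sum_add_distrib]
    apply mul_le_mul_of_nonneg_left _ (by norm_num : (0:ℝ) ≤ 1 / 2)
    exact Finset.sum_le_sum fun d _ => ptwise1 (p d) (q d) (hp d) (hq d)
  · have h1 : ∑ d, |p d - q d| * |Real.log (((p d + q d) / 2) / q d)|
        ≤ ∑ d, c ^ 2 * q d :=
      Finset.sum_le_sum fun d _ => ptwise2 (p d) (q d) c (hp d) (hq d) hc (hbound d)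
    rw [← Finset.mul_sum, hq1, mul_one] at h1
    linarith
end

section
/- Let W be a finite set, D a finite set, f : D × W → ℝ nonnegative with Σ_d f(d,w) = 1 for each w (a family of conditional pmfs), and let P, Q be pmfs on W. Define mixtures p_A(d) = Σ_w f(d,w) Q(w) and p_O(d) = Σ_w f(d,w) P(w). Then for every d, |p_A(d) − p_O(d)| ≤ (max_w f(d,w) − min_w f(d,w)) · TV(P, Q), where TV(P,Q) = (1/2) Σ_w |P(w) − Q(w)|. -/
theorem mixture_diff_le_tv {W D : Type*} [Fintype W] [Fintype D] [Nonempty W]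
    (f : D → W → ℝ) (P Q : W → ℝ)
    (hf : ∀ d w, 0 ≤ f d w) (hfpmf : ∀ w, ∑ d, f d w = 1)
    (hP : ∀ w, 0 ≤ P w) (hQ : ∀ w, 0 ≤ Q w)
    (hP1 : ∑ w, P w = 1) (hQ1 : ∑ w, Q w = 1) :
    ∀ d, |(∑ w, f d w * Q w) - (∑ w, f d w * P w)| ≤
      ((⨆ w, f d w) - (⨅ w, f d w)) * ((1 / 2) * ∑ w, |P w - Q w|) := by
  intro d
  set M := ⨆ w, f d w with hM
  set m := ⨅ w, f d w with hm
  have hle : ∀ w, f d w ≤ M := fun w =>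
    le_ciSup (Set.Finite.bddAbove (Set.finite_range _)) w
  have hge : ∀ w, m ≤ f d w := fun w =>
    ciInf_le (Set.Finite.bddBelow (Set.finite_range _)) w
  set c := (M + m) / 2 with hc
  have key : (∑ w, f d w * Q w) - (∑ w, f d w * P w)
      = ∑ w, (f d w - c) * (Q w - P w) := by
    have h : ∀ w, (f d w - c) * (Q w - P w)
        = f d w * Q w - f d w * P w - c * Q w + c * P w := fun w => by ring
    simp_rw [h]
    rw [Finset.sum_add_distrib, Finset.sum_sub_distrib, Finset.sum_sub_distrib,
      ← Finset.mul_sum, ← Finset.mul_sum, hP1, hQ1]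
    ring
  calc |(∑ w, f d w * Q w) - (∑ w, f d w * P w)|
      = |∑ w, (f d w - c) * (Q w - P w)| := by rw [key]
    _ ≤ ∑ w, |(f d w - c) * (Q w - P w)| := Finset.abs_sum_le_sum_abs _ _
    _ ≤ ∑ w, ((M - m) / 2) * |P w - Q w| := by
        apply Finset.sum_le_sum
        intro w _
        rw [abs_mul, abs_sub_comm (Q w) (P w)]
        apply mul_le_mul_of_nonneg_right _ (abs_nonneg _)
        rw [abs_le]
        constructor <;> [linarith [hge w]; linarith [hle w]]
    _ = (M - m) * ((1 / 2) * ∑ w, |P w - Q w|) := by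
        rw [← Finset.mul_sum]; ring
end

section
/- Suppose additionally that for all d, w, the ratio f(d,w)/π(d) ∈ [e^{-ξ}, e^{ξ}] for a fixed prior pmf π with π(d) > 0 and ξ ≥ 0. Then for every d, |p_A(d) − p_O(d)| ≤ (min_w f(d,w)) · (e^{2ξ} − 1) · TV(P, Q). -/
theorem mixture_diff_le_inf_tv {W D : Type*} [Fintype W] [Fintype D] [Nonempty W]
    (f : D → W → ℝ) (π : D → ℝ) (P Q : W → ℝ) (ξ : ℝ) (hξ : 0 ≤ ξ)
    (hf : ∀ d w, 0 ≤ f d w) (hfpmf : ∀ w, ∑ d, f d w = 1)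
    (hπ : ∀ d, 0 < π d) (hπ1 : ∑ d, π d = 1)
    (hratio : ∀ d w, Real.exp (-ξ) ≤ f d w / π d ∧ f d w / π d ≤ Real.exp ξ)
    (hP : ∀ w, 0 ≤ P w) (hQ : ∀ w, 0 ≤ Q w)
    (hP1 : ∑ w, P w = 1) (hQ1 : ∑ w, Q w = 1) :
    ∀ d, |(∑ w, f d w * Q w) - (∑ w, f d w * P w)| ≤
      (⨅ w, f d w) * (Real.exp (2 * ξ) - 1) * ((1 / 2) * ∑ w, |P w - Q w|) := by
  intro d
  set m : ℝ := ⨅ w, f d w with hm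
  have hbdd : BddBelow (Set.range fun w => f d w) := Set.Finite.bddBelow (Set.finite_range _)
  have hm_le : ∀ w, m ≤ f d w := fun w => ciInf_le hbdd w
  have hm0 : 0 ≤ m := le_ciInf fun w => hf d w
  -- π d ≤ exp ξ * m
  have h1 : Real.exp (-ξ) * π d ≤ m := by
    apply le_ciInf
    intro w
    have := (hratio d w).1
    rw [le_div_iff₀ (hπ d)] at this
    linarith
  have hπm : π d ≤ Real.exp ξ * m := by
    calc π d = Real.exp ξ * (Real.exp (-ξ) * π d) := by
          rw [← mul_assoc, ← Real.exp_add]; simp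
      _ ≤ Real.exp ξ * m := mul_le_mul_of_nonneg_left h1 (Real.exp_pos ξ).le
  have hupper : ∀ w, f d w ≤ Real.exp (2 * ξ) * m := by
    intro w
    have h2 := (hratio d w).2
    rw [div_le_iff₀ (hπ d)] at h2
    calc f d w ≤ Real.exp ξ * π d := h2
      _ ≤ Real.exp ξ * (Real.exp ξ * m) := by
          apply mul_le_mul_of_nonneg_left hπm (Real.exp_pos ξ).le
      _ = Real.exp (2 * ξ) * m := by rw [← mul_assoc, ← Real.exp_add]; ring_nf
  set C : ℝ := m * (Real.exp (2 * ξ) - 1) with hC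
  have hC0 : 0 ≤ C := by
    apply mul_nonneg hm0
    have : (1 : ℝ) ≤ Real.exp (2 * ξ) := by
      rw [← Real.exp_zero]; exact Real.exp_le_exp.2 (by positivity)
    linarith
  have hbound : ∀ w, |f d w - m - C / 2| ≤ C / 2 := by
    intro w
    rw [abs_le]
    constructor
    · have := hm_le w; linarith
    · have := hupper w; nlinarith
  have hsum0 : ∑ w, (Q w - P w) = 0 := by
    rw [Finset.sum_sub_distrib, hP1, hQ1]; ring
  have key : (∑ w, f d w * Q w) - (∑ w, f d w * P w)
      = ∑ w, (f d w - m - C / 2) * (Q w - P w) := by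
    have : ∑ w, (f d w - m - C / 2) * (Q w - P w)
        = (∑ w, f d w * (Q w - P w)) - (m + C / 2) * ∑ w, (Q w - P w) := by
      rw [Finset.mul_sum, ← Finset.sum_sub_distrib]
      congr 1; ext w; ring
    rw [this, hsum0, mul_zero, sub_zero, ← Finset.sum_sub_distrib]
    congr 1; ext w; ring
  rw [key]
  calc |∑ w, (f d w - m - C / 2) * (Q w - P w)|
      ≤ ∑ w, |(f d w - m - C / 2) * (Q w - P w)| := Finset.abs_sum_le_sum_abs _ _
    _ ≤ ∑ w, (C / 2) * |P w - Q w| := by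
        apply Finset.sum_le_sum
        intro w _
        rw [abs_mul, show |Q w - P w| = |P w - Q w| from abs_sub_comm _ _]
        exact mul_le_mul_of_nonneg_right (hbound w) (abs_nonneg _)
    _ = m * (Real.exp (2 * ξ) - 1) * ((1 / 2) * ∑ w, |P w - Q w|) := by
        rw [← Finset.mul_sum, hC]; ring
end

section
/- Under the hypotheses that for all d, w, f(d,w)/π(d) ∈ [e^{-ξ}, e^{ξ}] with f(d,w) > 0, the Jensen–Shannon divergence between the mixtures satisfies JS(p_A ‖ p_O) ≤ (1/4)(e^{2ξ} − 1)² · TV(P, Q)². -/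
/-- Jensen–Shannon divergence between pmfs on a finite set, natural log. -/
noncomputable def JSdiv {D : Type*} [Fintype D] (p q : D → ℝ) : ℝ :=
  (1 / 2) * ∑ d, p d * Real.log (p d / ((p d + q d) / 2))
    + (1 / 2) * ∑ d, q d * Real.log (q d / ((p d + q d) / 2))

lemma log_quad_bound {a m : ℝ} (ha : 0 < a) (hm : 0 < m) :
    a * Real.log (a / m) ≤ (a - m) ^ 2 / m + (a - m) := by
  have h := Real.log_le_sub_one_of_pos (div_pos ha hm)
  have h2 : a * Real.log (a / m) ≤ a * (a / m - 1) :=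
    mul_le_mul_of_nonneg_left h ha.le
  have h3 : a * (a / m - 1) = (a - m) ^ 2 / m + (a - m) := by
    field_simp
    ring
  linarith

set_option maxHeartbeats 1000000 in
theorem js_mixtures_le {W D : Type*} [Fintype W] [Fintype D] [Nonempty W]
    (f : D → W → ℝ) (π : D → ℝ) (P Q : W → ℝ) (ξ : ℝ) (hξ : 0 ≤ ξ)
    (hf : ∀ d w, 0 < f d w) (hfpmf : ∀ w, ∑ d, f d w = 1)
    (hπ : ∀ d, 0 < π d) (hπ1 : ∑ d, π d = 1)
    (hratio : ∀ d w, Real.exp (-ξ) ≤ f d w / π d ∧ f d w / π d ≤ Real.exp ξ)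
    (hP : ∀ w, 0 ≤ P w) (hQ : ∀ w, 0 ≤ Q w)
    (hP1 : ∑ w, P w = 1) (hQ1 : ∑ w, Q w = 1) :
    JSdiv (fun d => ∑ w, f d w * Q w) (fun d => ∑ w, f d w * P w) ≤
      (1 / 4) * (Real.exp (2 * ξ) - 1) ^ 2 * ((1 / 2) * ∑ w, |P w - Q w|) ^ 2 := by
  set a : ℝ := Real.exp ξ with hadef
  set b : ℝ := Real.exp (-ξ) with hbdef
  have ha0 : 0 < a := Real.exp_pos ξ
  have hb0 : 0 < b := Real.exp_pos (-ξ)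
  have ha1 : 1 ≤ a := Real.one_le_exp hξ
  have hab : a * b = 1 := by
    rw [hadef, hbdef, ← Real.exp_add]
    simp
  have h2ξ : Real.exp (2 * ξ) = a * a := by
    rw [two_mul, Real.exp_add, hadef]
  set T : ℝ := (1 / 2) * ∑ w, |P w - Q w| with hTdef
  have hT0 : 0 ≤ T := by
    rw [hTdef]
    positivity
  set p : D → ℝ := fun d => ∑ w, f d w * Q w with hpdef
  set q : D → ℝ := fun d => ∑ w, f d w * P w with hqdef
  -- pointwise bounds on f
  have hflb : ∀ d w, b * π d ≤ f d w := by
    intro d w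
    have h := (hratio d w).1
    rw [le_div_iff₀ (hπ d)] at h
    linarith
  have hfub : ∀ d w, f d w ≤ a * π d := by
    intro d w
    have h := (hratio d w).2
    rw [div_le_iff₀ (hπ d)] at h
    linarith
  -- lower bounds on p, q
  have hplb : ∀ d, b * π d ≤ p d := by
    intro d
    have h1 : ∑ w, b * π d * Q w ≤ ∑ w, f d w * Q w :=
      Finset.sum_le_sum fun w _ => mul_le_mul_of_nonneg_right (hflb d w) (hQ w)
    calc b * π d = b * π d * ∑ w, Q w := by rw [hQ1, mul_one]
      _ = ∑ w, b * π d * Q w := by rw [Finset.mul_sum]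
      _ ≤ p d := h1
  have hqlb : ∀ d, b * π d ≤ q d := by
    intro d
    have h1 : ∑ w, b * π d * P w ≤ ∑ w, f d w * P w :=
      Finset.sum_le_sum fun w _ => mul_le_mul_of_nonneg_right (hflb d w) (hP w)
    calc b * π d = b * π d * ∑ w, P w := by rw [hP1, mul_one]
      _ = ∑ w, b * π d * P w := by rw [Finset.mul_sum]
      _ ≤ q d := h1
  have hp_pos : ∀ d, 0 < p d := fun d => lt_of_lt_of_le (mul_pos hb0 (hπ d)) (hplb d)
  have hq_pos : ∀ d, 0 < q d := fun d => lt_of_lt_of_le (mul_pos hb0 (hπ d)) (hqlb d)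
  have hm_pos : ∀ d, 0 < (p d + q d) / 2 := fun d => by
    have := hp_pos d; have := hq_pos d; linarith
  -- total masses
  have hsum1 : ∀ R : W → ℝ, (∑ w, R w = 1) → ∑ d, ∑ w, f d w * R w = 1 := by
    intro R hR
    rw [Finset.sum_comm]
    have h : ∀ w : W, ∑ d, f d w * R w = R w := fun w => by
      rw [← Finset.sum_mul, hfpmf, one_mul]
    rw [Finset.sum_congr rfl fun w _ => h w]
    exact hR
  have hps : ∑ d, p d = 1 := hsum1 Q hQ1
  have hqs : ∑ d, q d = 1 := hsum1 P hP1
  have hms : ∑ d, (p d + q d) / 2 = 1 := by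
    have : ∑ d, (p d + q d) / 2 = ((∑ d, p d) + ∑ d, q d) / 2 := by
      rw [← Finset.sum_add_distrib, Finset.sum_div]
    rw [this, hps, hqs]
    norm_num
  -- KL ≤ chi-square bound
  have hKL : ∀ r : D → ℝ, (∀ d, 0 < r d) → (∑ d, r d = 1) →
      ∑ d, r d * Real.log (r d / ((p d + q d) / 2)) ≤
        ∑ d, (r d - (p d + q d) / 2) ^ 2 / ((p d + q d) / 2) := by
    intro r hr hr1
    have h1 : ∑ d, r d * Real.log (r d / ((p d + q d) / 2)) ≤
        ∑ d, ((r d - (p d + q d) / 2) ^ 2 / ((p d + q d) / 2) + (r d - (p d + q d) / 2)) :=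
      Finset.sum_le_sum fun d _ => log_quad_bound (hr d) (hm_pos d)
    have h2 : ∑ d, ((r d - (p d + q d) / 2) ^ 2 / ((p d + q d) / 2) + (r d - (p d + q d) / 2))
        = ∑ d, (r d - (p d + q d) / 2) ^ 2 / ((p d + q d) / 2)
          + ((∑ d, r d) - ∑ d, (p d + q d) / 2) := by
      rw [Finset.sum_add_distrib, Finset.sum_sub_distrib]
    rw [h2, hr1, hms] at h1
    simpa using h1
  have hA : ∑ d, p d * Real.log (p d / ((p d + q d) / 2)) ≤
      ∑ d, (p d - q d) ^ 2 / (2 * (p d + q d)) := by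
    refine le_trans (hKL p hp_pos hps) (le_of_eq (Finset.sum_congr rfl fun d _ => ?_))
    have h := (hm_pos d).ne'
    have hpq : p d + q d ≠ 0 := by have := hm_pos d; intro h0; rw [h0] at this; simp at this
    field_simp
    ring
  have hB : ∑ d, q d * Real.log (q d / ((p d + q d) / 2)) ≤
      ∑ d, (p d - q d) ^ 2 / (2 * (p d + q d)) := by
    refine le_trans (hKL q hq_pos hqs) (le_of_eq (Finset.sum_congr rfl fun d _ => ?_))
    have hpq : p d + q d ≠ 0 := by have := hm_pos d; intro h0; rw [h0] at this; simp at this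
    field_simp
    ring
  -- bound on |p - q|
  have habs : ∀ d, |p d - q d| ≤ (a - b) * π d * T := by
    intro d
    have hpq : p d - q d = ∑ w, (f d w - (a + b) / 2 * π d) * (Q w - P w) := by
      have expand : ∀ w : W, (f d w - (a + b) / 2 * π d) * (Q w - P w)
          = (f d w * Q w - f d w * P w)
            - ((a + b) / 2 * π d * Q w - (a + b) / 2 * π d * P w) := fun w => by ring
      rw [Finset.sum_congr rfl fun w _ => expand w, Finset.sum_sub_distrib,
        Finset.sum_sub_distrib, Finset.sum_sub_distrib, ← Finset.mul_sum, ← Finset.mul_sum,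
        hP1, hQ1]
      simp [hpdef, hqdef]
    have hbd : ∀ w : W, |(f d w - (a + b) / 2 * π d) * (Q w - P w)| ≤
        ((a - b) / 2 * π d) * |P w - Q w| := by
      intro w
      rw [abs_mul, abs_sub_comm (Q w) (P w)]
      refine mul_le_mul_of_nonneg_right ?_ (abs_nonneg _)
      rw [abs_le]
      constructor
      · have := hflb d w; nlinarith [hπ d]
      · have := hfub d w; nlinarith [hπ d]
    calc |p d - q d| = |∑ w, (f d w - (a + b) / 2 * π d) * (Q w - P w)| := by rw [hpq]
      _ ≤ ∑ w, |(f d w - (a + b) / 2 * π d) * (Q w - P w)| := Finset.abs_sum_le_sum_abs _ _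
      _ ≤ ∑ w, ((a - b) / 2 * π d) * |P w - Q w| := Finset.sum_le_sum fun w _ => hbd w
      _ = ((a - b) / 2 * π d) * ∑ w, |P w - Q w| := by rw [Finset.mul_sum]
      _ = (a - b) * π d * T := by rw [hTdef]; ring
  -- pointwise chi-square term bound
  have hptw : ∀ d, (p d - q d) ^ 2 / (2 * (p d + q d)) ≤
      (1 / 4) * a * (a - b) ^ 2 * T ^ 2 * π d := by
    intro d
    have hnum : (p d - q d) ^ 2 ≤ ((a - b) * π d * T) ^ 2 := by
      rw [← sq_abs (p d - q d)]
      exact pow_le_pow_left₀ (abs_nonneg _) (habs d) 2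
    have hden : 4 * (b * π d) ≤ 2 * (p d + q d) := by
      have := hplb d; have := hqlb d; linarith
    have hden0 : 0 < 4 * (b * π d) := by
      have := mul_pos hb0 (hπ d); linarith
    have h1 : (p d - q d) ^ 2 / (2 * (p d + q d)) ≤
        ((a - b) * π d * T) ^ 2 / (4 * (b * π d)) :=
      div_le_div₀ (sq_nonneg _) hnum hden0 hden
    have h2 : ((a - b) * π d * T) ^ 2 / (4 * (b * π d)) =
        (1 / 4) * a * (a - b) ^ 2 * T ^ 2 * π d := by
      have ha' : a ≠ 0 := ha0.ne'
      have hπ' : π d ≠ 0 := (hπ d).ne'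
      rw [hbdef, Real.exp_neg, ← hadef]
      field_simp
    rw [h2] at h1
    exact h1
  -- sum it up
  have hS : ∑ d, (p d - q d) ^ 2 / (2 * (p d + q d)) ≤ (1 / 4) * a * (a - b) ^ 2 * T ^ 2 := by
    calc ∑ d, (p d - q d) ^ 2 / (2 * (p d + q d))
        ≤ ∑ d, (1 / 4) * a * (a - b) ^ 2 * T ^ 2 * π d :=
          Finset.sum_le_sum fun d _ => hptw d
      _ = (1 / 4) * a * (a - b) ^ 2 * T ^ 2 * ∑ d, π d := by rw [← Finset.mul_sum]
      _ = (1 / 4) * a * (a - b) ^ 2 * T ^ 2 := by rw [hπ1, mul_one]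
  have hfinal : (1 / 4) * a * (a - b) ^ 2 * T ^ 2 ≤
      (1 / 4) * (Real.exp (2 * ξ) - 1) ^ 2 * T ^ 2 := by
    rw [h2ξ]
    have hkey : (a * a - 1) ^ 2 = a ^ 2 * (a - b) ^ 2 := by
      have h : a * a - 1 = a * (a - b) := by rw [← hab]; ring
      rw [h]; ring
    rw [hkey]
    have haa : 0 ≤ a ^ 2 - a := by nlinarith
    have hdiff : (1 / 4) * (a ^ 2 * (a - b) ^ 2) * T ^ 2 - (1 / 4) * a * (a - b) ^ 2 * T ^ 2
        = (1 / 4) * ((a ^ 2 - a) * ((a - b) ^ 2 * T ^ 2)) := by ring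
    have hnn : 0 ≤ (1 / 4) * ((a ^ 2 - a) * ((a - b) ^ 2 * T ^ 2)) :=
      mul_nonneg (by norm_num) (mul_nonneg haa (mul_nonneg (sq_nonneg _) (sq_nonneg _)))
    linarith
  rw [JSdiv]
  calc (1 / 2) * ∑ d, p d * Real.log (p d / ((p d + q d) / 2))
        + (1 / 2) * ∑ d, q d * Real.log (q d / ((p d + q d) / 2))
      ≤ (1 / 2) * ∑ d, (p d - q d) ^ 2 / (2 * (p d + q d))
        + (1 / 2) * ∑ d, (p d - q d) ^ 2 / (2 * (p d + q d)) := by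
        linarith [hA, hB]
    _ = ∑ d, (p d - q d) ^ 2 / (2 * (p d + q d)) := by ring
    _ ≤ (1 / 4) * a * (a - b) ^ 2 * T ^ 2 := hS
    _ ≤ (1 / 4) * (Real.exp (2 * ξ) - 1) ^ 2 * T ^ 2 := hfinal
end

section
/- The square root of the Jensen–Shannon divergence satisfies the triangle inequality on probability mass functions over a finite set: for pmfs p, q, r, √JS(p‖r) ≤ √JS(p‖q) + √JS(q‖r). -/
open Real Filter Topology Set MeasureTheory

namespace Real

theorem sqrt_le_sqrt_add_sqrt_iff {a b c : ℝ} (hb : 0 ≤ b) (hc : 0 ≤ c) :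
    √a ≤ √b + √c ↔ a ≤ b + c + 2 * (√b * √c) := by
  rw [sqrt_le_left (by positivity), add_sq, sq_sqrt hb, sq_sqrt hc]
  constructor <;> intro h <;> linarith

theorem sqrt_le_sqrt_add_sqrt_of_sq_le {a b c : ℝ} (hb : 0 ≤ b) (hc : 0 ≤ c)
    (h : (a - b - c) ^ 2 ≤ 4 * b * c) : √a ≤ √b + √c := by
  have h4 : √(4 * b * c) = 2 * (√b * √c) := by
    rw [mul_assoc, sqrt_mul (by norm_num), sqrt_mul hb, show (4 : ℝ) = 2 ^ 2 by norm_num,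
      sqrt_sq zero_le_two]
  rw [sqrt_le_sqrt_add_sqrt_iff hb hc]
  linarith [le_abs_self (a - b - c), abs_le_sqrt h]

theorem sqrt_sum_le_sqrt_sum_add_sqrt_sum {ι : Type*} (s : Finset ι) {f g h : ι → ℝ}
    (hf : ∀ i, 0 ≤ f i) (hg : ∀ i, 0 ≤ g i) (hfgh : ∀ i ∈ s, √(h i) ≤ √(f i) + √(g i)) :
    √(∑ i ∈ s, h i) ≤ √(∑ i ∈ s, f i) + √(∑ i ∈ s, g i) := by
  rw [sqrt_le_sqrt_add_sqrt_iff (Finset.sum_nonneg fun i _ ↦ hf i)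
    (Finset.sum_nonneg fun i _ ↦ hg i)]
  calc ∑ i ∈ s, h i ≤ ∑ i ∈ s, (f i + g i + 2 * (√(f i) * √(g i))) :=
        Finset.sum_le_sum fun i hi ↦ (sqrt_le_sqrt_add_sqrt_iff (hf i) (hg i)).1 (hfgh i hi)
    _ = ∑ i ∈ s, f i + ∑ i ∈ s, g i + 2 * ∑ i ∈ s, √(f i) * √(g i) := by
      rw [Finset.sum_add_distrib, Finset.sum_add_distrib, Finset.mul_sum]
    _ ≤ _ := by gcongr; exact sum_sqrt_mul_sqrt_le s hf hg

end Real

namespace MeasureTheory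

variable {α : Type*} [MeasurableSpace α] {μ : Measure α} {f g h : α → ℝ}

theorem memLp_two_sqrt (hf : Integrable f μ) (hf0 : 0 ≤ᵐ[μ] f) :
    MemLp (fun x ↦ √(f x)) 2 μ := by
  refine (memLp_two_iff_integrable_sq
    (Real.continuous_sqrt.comp_aestronglyMeasurable hf.aestronglyMeasurable)).2 ?_
  refine hf.congr ?_
  filter_upwards [hf0] with x hx
  exact (Real.sq_sqrt hx).symm

theorem integral_sqrt_mul_sqrt_le (hf : Integrable f μ) (hg : Integrable g μ)
    (hf0 : 0 ≤ᵐ[μ] f) (hg0 : 0 ≤ᵐ[μ] g) :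
    ∫ x, √(f x) * √(g x) ∂μ ≤ √(∫ x, f x ∂μ) * √(∫ x, g x ∂μ) := by
  have key := integral_mul_le_Lp_mul_Lq_of_nonneg Real.HolderConjugate.two_two
    (ae_of_all μ fun x ↦ Real.sqrt_nonneg (f x))
    (ae_of_all μ fun x ↦ Real.sqrt_nonneg (g x))
    (by simpa using memLp_two_sqrt hf hf0) (by simpa using memLp_two_sqrt hg hg0)
  have hsq {f : α → ℝ} (hf0 : 0 ≤ᵐ[μ] f) : ∫ x, √(f x) ^ (2 : ℝ) ∂μ = ∫ x, f x ∂μ := by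
    refine integral_congr_ae ?_
    filter_upwards [hf0] with x hx
    simp [Real.sq_sqrt hx]
  rwa [hsq hf0, hsq hg0, ← Real.sqrt_eq_rpow, ← Real.sqrt_eq_rpow] at key

theorem sqrt_integral_le_sqrt_integral_add_sqrt_integral (hf : Integrable f μ)
    (hg : Integrable g μ) (hh : Integrable h μ) (hf0 : 0 ≤ᵐ[μ] f) (hg0 : 0 ≤ᵐ[μ] g)
    (hfgh : ∀ᵐ x ∂μ, √(h x) ≤ √(f x) + √(g x)) :
    √(∫ x, h x ∂μ) ≤ √(∫ x, f x ∂μ) + √(∫ x, g x ∂μ) := by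
  have hfg : Integrable (fun x ↦ √(f x) * √(g x)) μ :=
    (memLp_two_sqrt hf hf0).integrable_mul (memLp_two_sqrt hg hg0)
  rw [Real.sqrt_le_sqrt_add_sqrt_iff (integral_nonneg_of_ae hf0) (integral_nonneg_of_ae hg0)]
  calc ∫ x, h x ∂μ ≤ ∫ x, (f x + g x + 2 * (√(f x) * √(g x))) ∂μ := by
        refine integral_mono_ae hh ((hf.add hg).add (hfg.const_mul 2)) ?_
        filter_upwards [hf0, hg0, hfgh] with x hfx hgx hx
        exact (Real.sqrt_le_sqrt_add_sqrt_iff hfx hgx).1 hx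
    _ = ∫ x, f x ∂μ + ∫ x, g x ∂μ + 2 * ∫ x, √(f x) * √(g x) ∂μ := by
      rw [integral_add (f := fun x ↦ f x + g x) (hf.add hg) (hfg.const_mul 2), integral_add hf hg,
        integral_const_mul]
    _ ≤ _ := by gcongr; exact integral_sqrt_mul_sqrt_le hf hg hf0 hg0

end MeasureTheory

theorem sqrt_sq_sub_div_triangle {a b c : ℝ} (ha : 0 < a) (hb : 0 < b) (hc : 0 < c) :
    √((a - c) ^ 2 / (a * c * (a + c))) ≤
      √((a - b) ^ 2 / (a * b * (a + b))) + √((b - c) ^ 2 / (b * c * (b + c))) := by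
  set Δ := a * b * c * ((a + b) * (b + c) * (a + c))
  have hΔ : 0 < Δ := by positivity
  set A := (a - c) ^ 2 * (b * ((a + b) * (b + c)))
  set B := (a - b) ^ 2 * (c * ((a + c) * (b + c)))
  set C := (b - c) ^ 2 * (a * ((a + b) * (a + c)))
  have hA : (a - c) ^ 2 / (a * c * (a + c)) = A / Δ := by
    rw [div_eq_div_iff (by positivity) hΔ.ne']; simp only [A, Δ]; ring
  have hB : (a - b) ^ 2 / (a * b * (a + b)) = B / Δ := by
    rw [div_eq_div_iff (by positivity) hΔ.ne']; simp only [B, Δ]; ring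
  have hC : (b - c) ^ 2 / (b * c * (b + c)) = C / Δ := by
    rw [div_eq_div_iff (by positivity) hΔ.ne']; simp only [C, Δ]; ring
  have key : 4 * B * C - (A - B - C) ^ 2 =
      4 * ((a - b) * (b - c) * (a - c)) ^ 2 * (a * b * c * (a + b + c)) := by
    simp only [A, B, C]; ring
  have hABC : (A - B - C) ^ 2 ≤ 4 * B * C := by
    rw [← sub_nonneg, key]; positivity
  have hB0 : 0 ≤ B := by positivity
  have hC0 : 0 ≤ C := by positivity
  clear_value A B C Δ
  rw [hA, hB, hC]
  refine sqrt_le_sqrt_add_sqrt_of_sq_le (div_nonneg hB0 hΔ.le) (div_nonneg hC0 hΔ.le) ?_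
  calc (A / Δ - B / Δ - C / Δ) ^ 2 = (A - B - C) ^ 2 / Δ ^ 2 := by ring
    _ ≤ 4 * B * C / Δ ^ 2 := by gcongr
    _ = 4 * (B / Δ) * (C / Δ) := by ring

noncomputable def jsTerm (u v : ℝ) : ℝ :=
  u * log (u / ((u + v) / 2)) + v * log (v / ((u + v) / 2))

noncomputable def jsKernel (u v t : ℝ) : ℝ :=
  t * (u - v) ^ 2 / ((2 * u + t) * (2 * v + t) * (u + v + t))

noncomputable def jsPrimitive (u v t : ℝ) : ℝ :=
  (u + v) * log (t + (u + v)) - u * log (t + 2 * u) - v * log (t + 2 * v)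

theorem JSdiv_eq_half_sum_jsTerm {D : Type*} [Fintype D] (p q : D → ℝ) :
    JSdiv p q = 1 / 2 * ∑ d, jsTerm (p d) (q d) := by
  simp only [JSdiv, jsTerm, Finset.sum_add_distrib, mul_add]

theorem mul_log_div_half_add {u v : ℝ} (hu : 0 ≤ u) (hv : 0 ≤ v) :
    u * log (u / ((u + v) / 2)) = u * log (2 * u) - u * log (u + v) := by
  rcases hu.eq_or_lt with rfl | hu
  · simp
  · rw [div_div_eq_mul_div, mul_comm u 2, log_div (by positivity) (by positivity), mul_sub]

theorem jsPrimitive_zero {u v : ℝ} (hu : 0 ≤ u) (hv : 0 ≤ v) :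
    jsPrimitive u v 0 = -jsTerm u v := by
  rw [jsPrimitive, jsTerm, mul_log_div_half_add hu hv, add_comm u v,
    mul_log_div_half_add hv hu]
  simp only [zero_add]
  ring

theorem jsKernel_nonneg {u v t : ℝ} (hu : 0 ≤ u) (hv : 0 ≤ v) (ht : 0 ≤ t) :
    0 ≤ jsKernel u v t := by
  unfold jsKernel; positivity

theorem hasDerivAt_jsPrimitive {u v t : ℝ} (hu : 0 ≤ u) (hv : 0 ≤ v) (ht : 0 < t) :
    HasDerivAt (jsPrimitive u v) (jsKernel u v t) t := by
  have hlog (c k : ℝ) (hk : 0 ≤ k) :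
      HasDerivAt (fun s ↦ c * log (s + k)) (c / (t + k)) t := by
    simpa [div_eq_mul_inv] using
      (((hasDerivAt_id t).add_const k).log (by positivity : t + k ≠ 0)).const_mul c
  refine (((hlog (u + v) (u + v) (by positivity)).sub (hlog u (2 * u) (by positivity))).sub
    (hlog v (2 * v) (by positivity))).congr_deriv ?_
  unfold jsKernel
  field_simp
  ring

theorem tendsto_log_add_sub_log_add (a b : ℝ) :
    Tendsto (fun t ↦ log (t + a) - log (t + b)) atTop (𝓝 0) := by
  simpa using (tendsto_log_comp_add_sub_log a).sub (tendsto_log_comp_add_sub_log b)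

theorem tendsto_jsPrimitive_atTop (u v : ℝ) : Tendsto (jsPrimitive u v) atTop (𝓝 0) := by
  have h := ((tendsto_log_add_sub_log_add (u + v) (2 * u)).const_mul u).add
    ((tendsto_log_add_sub_log_add (u + v) (2 * v)).const_mul v)
  rw [mul_zero, mul_zero, add_zero] at h
  refine h.congr fun t ↦ ?_
  rw [jsPrimitive]; ring

theorem continuousAt_mul_log_add {c k : ℝ} (h : k = 0 → c = 0) :
    ContinuousAt (fun t ↦ c * log (t + k)) 0 := by
  by_cases hc : c = 0
  · simp only [hc, zero_mul]; exact continuousAt_const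
  · exact continuousAt_const.mul
      ((continuousAt_id.add continuousAt_const).log (by simpa using mt h hc))

theorem continuousAt_jsPrimitive_zero {u v : ℝ} (hu : 0 ≤ u) (hv : 0 ≤ v) :
    ContinuousAt (jsPrimitive u v) 0 :=
  ((continuousAt_mul_log_add id).sub (continuousAt_mul_log_add (by intro h; linarith))).sub
    (continuousAt_mul_log_add (by intro h; linarith))

theorem sqrt_jsKernel_triangle {x y z t : ℝ} (hx : 0 ≤ x) (hy : 0 ≤ y) (hz : 0 ≤ z) (ht : 0 < t) :
    √(jsKernel x z t) ≤ √(jsKernel x y t) + √(jsKernel y z t) := by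
  have h (u v : ℝ) (hu : 0 ≤ u) (hv : 0 ≤ v) : jsKernel u v t = t / 2 *
      (((2 * u + t) - (2 * v + t)) ^ 2 /
        ((2 * u + t) * (2 * v + t) * ((2 * u + t) + (2 * v + t)))) := by
    unfold jsKernel
    field_simp
    ring
  rw [h x z hx hz, h x y hx hy, h y z hy hz, sqrt_mul (by positivity), sqrt_mul (by positivity),
    sqrt_mul (by positivity), ← mul_add]
  gcongr
  exact sqrt_sq_sub_div_triangle (by positivity) (by positivity) (by positivity)

theorem integrableOn_jsKernel {u v : ℝ} (hu : 0 ≤ u) (hv : 0 ≤ v) :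
    IntegrableOn (jsKernel u v) (Ioi 0) :=
  integrableOn_Ioi_deriv_of_nonneg (continuousAt_jsPrimitive_zero hu hv).continuousWithinAt
    (fun _ ht ↦ hasDerivAt_jsPrimitive hu hv ht) (fun _ ht ↦ jsKernel_nonneg hu hv (le_of_lt ht))
    (tendsto_jsPrimitive_atTop u v)

theorem integral_jsKernel {u v : ℝ} (hu : 0 ≤ u) (hv : 0 ≤ v) :
    ∫ t in Ioi 0, jsKernel u v t = jsTerm u v := by
  rw [integral_Ioi_of_hasDerivAt_of_nonneg (continuousAt_jsPrimitive_zero hu hv).continuousWithinAt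
    (fun _ ht ↦ hasDerivAt_jsPrimitive hu hv ht) (fun _ ht ↦ jsKernel_nonneg hu hv (le_of_lt ht))
    (tendsto_jsPrimitive_atTop u v), jsPrimitive_zero hu hv, zero_sub, neg_neg]

theorem jsTerm_nonneg {u v : ℝ} (hu : 0 ≤ u) (hv : 0 ≤ v) : 0 ≤ jsTerm u v := by
  rw [← integral_jsKernel hu hv]
  exact setIntegral_nonneg measurableSet_Ioi fun _ ht ↦ jsKernel_nonneg hu hv (le_of_lt ht)

theorem sqrt_jsTerm_triangle {x y z : ℝ} (hx : 0 ≤ x) (hy : 0 ≤ y) (hz : 0 ≤ z) :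
    √(jsTerm x z) ≤ √(jsTerm x y) + √(jsTerm y z) := by
  have hK {u v : ℝ} (hu : 0 ≤ u) (hv : 0 ≤ v) : 0 ≤ᵐ[volume.restrict (Ioi 0)] jsKernel u v :=
    ae_restrict_of_forall_mem measurableSet_Ioi fun _ ht ↦ jsKernel_nonneg hu hv (le_of_lt ht)
  rw [← integral_jsKernel hx hz, ← integral_jsKernel hx hy, ← integral_jsKernel hy hz]
  exact sqrt_integral_le_sqrt_integral_add_sqrt_integral (integrableOn_jsKernel hx hy)
    (integrableOn_jsKernel hy hz) (integrableOn_jsKernel hx hz) (hK hx hy) (hK hy hz)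
    (ae_restrict_of_forall_mem measurableSet_Ioi fun _ ht ↦ sqrt_jsKernel_triangle hx hy hz ht)

theorem sqrt_js_triangle_general {D : Type*} [Fintype D] (p q r : D → ℝ)
    (hp : ∀ d, 0 ≤ p d) (hq : ∀ d, 0 ≤ q d) (hr : ∀ d, 0 ≤ r d) :
    Real.sqrt (JSdiv p r) ≤ Real.sqrt (JSdiv p q) + Real.sqrt (JSdiv q r) := by
  simp only [JSdiv_eq_half_sum_jsTerm]
  rw [sqrt_mul (by norm_num), sqrt_mul (by norm_num), sqrt_mul (by norm_num), ← mul_add]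
  gcongr
  exact sqrt_sum_le_sqrt_sum_add_sqrt_sum _ (fun d ↦ jsTerm_nonneg (hp d) (hq d))
    (fun d ↦ jsTerm_nonneg (hq d) (hr d)) fun d _ ↦ sqrt_jsTerm_triangle (hp d) (hq d) (hr d)

theorem sqrt_js_triangle {D : Type*} [Fintype D] (p q r : D → ℝ)
    (hp : ∀ d, 0 ≤ p d) (hq : ∀ d, 0 ≤ q d) (hr : ∀ d, 0 ≤ r d)
    (hp1 : ∑ d, p d = 1) (hq1 : ∑ d, q d = 1) (hr1 : ∑ d, r d = 1) :
    Real.sqrt (JSdiv p r) ≤ Real.sqrt (JSdiv p q) + Real.sqrt (JSdiv q r) :=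
  sqrt_js_triangle_general p q r hp hq hr
end

section
/- For Gaussian distributions P = N(μ, Σ₀) and Q = N(μ, Σ₀ + Σ_ε) on ℝ^m with Σ₀ = diag(σ₁²,…,σ_m²) and Σ_ε = σ_ε²·I, the total variation distance satisfies TV(P,Q) ≤ (3/2)·min{1, σ_ε²·√(Σ_{i=1}^m 1/σ_i⁴)}. -/
open MeasureTheory ProbabilityTheory
open scoped NNReal

/-- Total variation distance between two measures (sup over measurable sets). -/
noncomputable def tvDist {α : Type*} [MeasurableSpace α] (P Q : Measure α) : ℝ :=
  ⨆ (A : Set α) (_ : MeasurableSet A), |(P A).toReal - (Q A).toReal|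

/-!
Both measures have product densities `f = ∏ᵢ φ(σᵢ²)` and `g = ∏ᵢ φ(σᵢ² + σ_ε²)`. The total
variation distance is half the `L¹` distance of the densities, and by Cauchy–Schwarz applied to
`|f - g| = |√f - √g| (√f + √g)` (Le Cam) this is at most `√(1 - ρ²)`, where `ρ = ∫ √(f g)` is the
Bhattacharyya coefficient. It factorises over coordinates, and for one coordinate a Gaussian
integral gives `ρᵢ² = 2 a b / (a² + b²)` with `a = σᵢ`, `b² = σᵢ² + σ_ε²`, so that
`1 - ρᵢ² ≤ σ_ε⁴ / (8 σᵢ⁴)`. Finally `1 - ∏ ρᵢ² ≤ ∑ (1 - ρᵢ²)`.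
-/

open Real
open scoped ENNReal

theorem Finset.one_sub_prod_le_sum_one_sub {ι : Type*} (s : Finset ι) {f : ι → ℝ}
    (h0 : ∀ i ∈ s, 0 ≤ f i) (h1 : ∀ i ∈ s, f i ≤ 1) :
    1 - ∏ i ∈ s, f i ≤ ∑ i ∈ s, (1 - f i) := by
  induction s using Finset.cons_induction with
  | empty => simp
  | cons i s _ ih =>
    simp only [Finset.mem_cons, forall_eq_or_imp] at h0 h1
    rw [Finset.prod_cons, Finset.sum_cons]
    have hP1 := Finset.prod_le_one h0.2 h1.2
    nlinarith [ih h0.2 h1.2, mul_nonneg h0.1 (sub_nonneg.2 hP1)]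

theorem one_sub_two_sqrt_mul_div_add_le {a e : ℝ} (ha : 0 < a) (he : 0 ≤ e) :
    1 - 2 * √(a * (a + e)) / (a + (a + e)) ≤ e ^ 2 / (8 * a ^ 2) := by
  obtain ⟨s, hs, rfl⟩ : ∃ s, 0 < s ∧ a = s ^ 2 := ⟨√a, sqrt_pos.2 ha, (sq_sqrt ha.le).symm⟩
  obtain ⟨t, hst, rfl⟩ : ∃ t, s ≤ t ∧ e = t ^ 2 - s ^ 2 :=
    ⟨√(s ^ 2 + e), le_sqrt_of_sq_le (by linarith), by rw [sq_sqrt (by positivity)]; ring⟩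
  have ht : 0 < t := hs.trans_le hst
  have hden : 0 < s ^ 2 + t ^ 2 := by positivity
  have hsplit : 1 - 2 * (s * t) / (s ^ 2 + t ^ 2) = (t - s) ^ 2 / (s ^ 2 + t ^ 2) := by
    field_simp; ring
  rw [show s ^ 2 + (t ^ 2 - s ^ 2) = t ^ 2 by ring, sqrt_mul (sq_nonneg s), sqrt_sq hs.le,
    sqrt_sq ht.le, hsplit, div_le_div_iff₀ hden (by positivity)]
  -- `(t² - s²)² = (t - s)² (t + s)²` and `(t + s)² (s² + t²) ≥ 8 s⁴`
  have h1 : 4 * s ^ 2 ≤ (t + s) ^ 2 := by nlinarith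
  have h2 : 2 * s ^ 2 ≤ s ^ 2 + t ^ 2 := by nlinarith
  have h3 := mul_le_mul h1 h2 (by positivity) (by positivity)
  nlinarith [mul_le_mul_of_nonneg_left h3 (sq_nonneg (t - s))]

noncomputable def bhattacharyya {α : Type*} [MeasurableSpace α] (ν : Measure α) (f g : α → ℝ) :
    ℝ :=
  ∫ x, √(f x * g x) ∂ν

section Densities

variable {α : Type*} [MeasurableSpace α] {ν : Measure α} {f g : α → ℝ}

theorem MeasureTheory.Integrable.sqrt_mul (hf : Integrable f ν) (hg : Integrable g ν)
    (hf0 : 0 ≤ᵐ[ν] f) (hg0 : 0 ≤ᵐ[ν] g) : Integrable (fun x => √(f x * g x)) ν := by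
  refine (hf.add hg).mono' (continuous_sqrt.comp_aestronglyMeasurable
    (hf.aestronglyMeasurable.mul hg.aestronglyMeasurable)) ?_
  filter_upwards [hf0, hg0] with x (hfx : 0 ≤ f x) (hgx : 0 ≤ g x)
  rw [norm_of_nonneg (sqrt_nonneg _), Pi.add_apply, sqrt_le_left (by positivity)]
  nlinarith

theorem withDensity_ofReal_apply_eq_ofReal_setIntegral (hf : Integrable f ν) (hf0 : 0 ≤ᵐ[ν] f)
    {A : Set α} (hA : MeasurableSet A) :
    ν.withDensity (fun x => ENNReal.ofReal (f x)) A = ENNReal.ofReal (∫ x in A, f x ∂ν) := by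
  rw [withDensity_apply _ hA,
    ofReal_integral_eq_lintegral_ofReal hf.restrict (ae_restrict_of_ae hf0)]

theorem bhattacharyya_nonneg : 0 ≤ bhattacharyya ν f g :=
  integral_nonneg fun _ => sqrt_nonneg _

theorem sqrt_add_mul_sqrt_sq_ae_eq (hf0 : 0 ≤ᵐ[ν] f) (hg0 : 0 ≤ᵐ[ν] g) (c : ℝ) :
    (fun x => (√(f x) + c * √(g x)) ^ 2)
      =ᵐ[ν] fun x => f x + c ^ 2 * g x + 2 * c * √(f x * g x) := by
  filter_upwards [hf0, hg0] with x hfx hgx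
  rw [sqrt_mul hfx]
  linear_combination sq_sqrt hfx + c ^ 2 * sq_sqrt hgx

theorem integrable_sqrt_add_mul_sqrt_sq (hf : Integrable f ν) (hg : Integrable g ν)
    (hf0 : 0 ≤ᵐ[ν] f) (hg0 : 0 ≤ᵐ[ν] g) (c : ℝ) :
    Integrable (fun x => (√(f x) + c * √(g x)) ^ 2) ν :=
  (((hf.add (hg.const_mul _)).add ((hf.sqrt_mul hg hf0 hg0).const_mul _))).congr
    (sqrt_add_mul_sqrt_sq_ae_eq hf0 hg0 c).symm

theorem integral_sqrt_add_mul_sqrt_sq (hf : Integrable f ν) (hg : Integrable g ν)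
    (hf0 : 0 ≤ᵐ[ν] f) (hg0 : 0 ≤ᵐ[ν] g) (c : ℝ) :
    ∫ x, (√(f x) + c * √(g x)) ^ 2 ∂ν
      = ∫ x, f x ∂ν + c ^ 2 * ∫ x, g x ∂ν + 2 * c * bhattacharyya ν f g := by
  rw [integral_congr_ae (sqrt_add_mul_sqrt_sq_ae_eq hf0 hg0 c), integral_add, integral_add,
    integral_const_mul, integral_const_mul, bhattacharyya]
  exacts [hf, hg.const_mul _, hf.add (hg.const_mul _), (hf.sqrt_mul hg hf0 hg0).const_mul _]

theorem integral_mul_le_sqrt_integral_sq_mul_sqrt_integral_sq {u v : α → ℝ}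
    (hu0 : 0 ≤ᵐ[ν] u) (hv0 : 0 ≤ᵐ[ν] v) (hu : MemLp u 2 ν) (hv : MemLp v 2 ν) :
    ∫ x, u x * v x ∂ν ≤ √(∫ x, u x ^ 2 ∂ν) * √(∫ x, v x ^ 2 ∂ν) := by
  have h := integral_mul_le_Lp_mul_Lq_of_nonneg HolderConjugate.two_two hu0 hv0
    (by rwa [ENNReal.ofReal_ofNat]) (by rwa [ENNReal.ofReal_ofNat])
  simpa only [rpow_two, ← sqrt_eq_rpow] using h

theorem abs_setIntegral_sub_le_half_integral_abs_sub (hf : Integrable f ν) (hg : Integrable g ν)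
    (hfg : ∫ x, f x ∂ν = ∫ x, g x ∂ν) {A : Set α} (hA : MeasurableSet A) :
    |∫ x in A, f x ∂ν - ∫ x in A, g x ∂ν| ≤ (∫ x, |f x - g x| ∂ν) / 2 := by
  have hd : Integrable (fun x => f x - g x) ν := hf.sub hg
  -- `f - g` has total integral zero, so its integrals over `A` and `Aᶜ` cancel
  have hcancel : ∫ x in A, (f x - g x) ∂ν = -∫ x in Aᶜ, (f x - g x) ∂ν := by
    rw [eq_neg_iff_add_eq_zero, integral_add_compl hA hd, integral_sub hf hg, hfg, sub_self]
  have hA_le : |∫ x in A, (f x - g x) ∂ν| ≤ ∫ x in A, |f x - g x| ∂ν :=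
    abs_integral_le_integral_abs
  have hAc_le : |∫ x in Aᶜ, (f x - g x) ∂ν| ≤ ∫ x in Aᶜ, |f x - g x| ∂ν :=
    abs_integral_le_integral_abs
  rw [hcancel, abs_neg] at hA_le
  rw [← integral_sub hf.restrict hg.restrict, hcancel, abs_neg, ← integral_add_compl hA hd.abs]
  linarith

variable (hf : Integrable f ν) (hg : Integrable g ν) (hf0 : 0 ≤ᵐ[ν] f) (hg0 : 0 ≤ᵐ[ν] g)
  (hf1 : ∫ x, f x ∂ν = 1) (hg1 : ∫ x, g x ∂ν = 1)
include hf hg hf0 hg0 hf1 hg1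

theorem bhattacharyya_le_one : bhattacharyya ν f g ≤ 1 := by
  have h := integral_sqrt_add_mul_sqrt_sq hf hg hf0 hg0 (-1)
  rw [hf1, hg1] at h
  have : 0 ≤ ∫ x, (√(f x) + -1 * √(g x)) ^ 2 ∂ν := integral_nonneg fun x => sq_nonneg _
  linarith

theorem integral_abs_sub_le_two_mul_sqrt_one_sub_bhattacharyya_sq :
    ∫ x, |f x - g x| ∂ν ≤ 2 * √(1 - bhattacharyya ν f g ^ 2) := by
  have hsub := integral_sqrt_add_mul_sqrt_sq hf hg hf0 hg0 (-1)
  have hadd := integral_sqrt_add_mul_sqrt_sq hf hg hf0 hg0 1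
  have hρ1 := bhattacharyya_le_one hf hg hf0 hg0 hf1 hg1
  rw [hf1, hg1] at hsub hadd
  set ρ := bhattacharyya ν f g
  have hfactor : (fun x => |f x - g x|)
      =ᵐ[ν] fun x => |√(f x) + -1 * √(g x)| * (√(f x) + 1 * √(g x)) := by
    filter_upwards [hf0, hg0] with x (hfx : 0 ≤ f x) (hgx : 0 ≤ g x)
    rw [← abs_of_nonneg (by positivity : 0 ≤ √(f x) + 1 * √(g x)), ← abs_mul]
    congr 1
    linear_combination -sq_sqrt hfx + sq_sqrt hgx
  have hmemLp (c : ℝ) : MemLp (fun x => √(f x) + c * √(g x)) 2 ν :=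
    (memLp_two_iff_integrable_sq (by fun_prop)).2
      (integrable_sqrt_add_mul_sqrt_sq hf hg hf0 hg0 c)
  calc ∫ x, |f x - g x| ∂ν
      = ∫ x, |√(f x) + -1 * √(g x)| * (√(f x) + 1 * √(g x)) ∂ν := integral_congr_ae hfactor
    _ ≤ √(∫ x, |√(f x) + -1 * √(g x)| ^ 2 ∂ν) * √(∫ x, (√(f x) + 1 * √(g x)) ^ 2 ∂ν) :=
        integral_mul_le_sqrt_integral_sq_mul_sqrt_integral_sq (ae_of_all _ fun _ => abs_nonneg _)
          (ae_of_all _ fun _ => by positivity) (hmemLp (-1)).abs (hmemLp 1)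
    _ = √((2 - 2 * ρ) * (2 + 2 * ρ)) := by
        simp only [sq_abs]
        rw [hsub, hadd, ← sqrt_mul (by linarith)]
        ring_nf
    _ = 2 * √(1 - ρ ^ 2) := by
        rw [show (2 - 2 * ρ) * (2 + 2 * ρ) = 2 ^ 2 * (1 - ρ ^ 2) by ring, sqrt_mul (by norm_num),
          sqrt_sq zero_le_two]

theorem tvDist_withDensity_ofReal_le :
    tvDist (ν.withDensity fun x => ENNReal.ofReal (f x))
      (ν.withDensity fun x => ENNReal.ofReal (g x)) ≤ √(1 - bhattacharyya ν f g ^ 2) := by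
  refine Real.iSup_le (fun A => Real.iSup_le (fun hA => ?_) (sqrt_nonneg _)) (sqrt_nonneg _)
  rw [withDensity_ofReal_apply_eq_ofReal_setIntegral hf hf0 hA,
    withDensity_ofReal_apply_eq_ofReal_setIntegral hg hg0 hA,
    ENNReal.toReal_ofReal (setIntegral_nonneg_of_ae_restrict (ae_restrict_of_ae hf0)),
    ENNReal.toReal_ofReal (setIntegral_nonneg_of_ae_restrict (ae_restrict_of_ae hg0))]
  linarith [abs_setIntegral_sub_le_half_integral_abs_sub hf hg (hf1.trans hg1.symm) hA,
    integral_abs_sub_le_two_mul_sqrt_one_sub_bhattacharyya_sq hf hg hf0 hg0 hf1 hg1]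

end Densities

section Products

variable {ι α : Type*} [Fintype ι] [MeasurableSpace α] {ν : Measure α} [SigmaFinite ν]

theorem MeasureTheory.Measure.pi_eq_withDensity_ofReal_prod {μ : ι → Measure α}
    [∀ i, SigmaFinite (μ i)] {f : ι → α → ℝ} (hf : ∀ i, Integrable (f i) ν) (hf0 : ∀ i x, 0 ≤ f i x)
    (hμ : ∀ i, μ i = ν.withDensity fun x => ENNReal.ofReal (f i x)) :
    Measure.pi μ
      = (Measure.pi fun _ => ν).withDensity fun x => ENNReal.ofReal (∏ i, f i (x i)) := by
  refine Measure.pi_eq (μ := μ) fun s hs => ?_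
  have hbox : (Set.univ.pi s).indicator (fun x => ∏ i, f i (x i))
      = fun x => ∏ i, (s i).indicator (f i) (x i) := by
    ext x
    classical
    simp only [Set.indicator_apply, Set.mem_univ_pi, Fintype.prod_ite_zero]
  rw [withDensity_ofReal_apply_eq_ofReal_setIntegral (Integrable.fintype_prod hf)
      (ae_of_all _ fun x => Finset.prod_nonneg fun i _ => hf0 i (x i)) (MeasurableSet.univ_pi hs),
    ← integral_indicator (MeasurableSet.univ_pi hs), hbox, integral_fintype_prod_eq_prod,
    ENNReal.ofReal_prod_of_nonneg]
  · refine Finset.prod_congr rfl fun i _ => ?_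
    rw [hμ, withDensity_ofReal_apply_eq_ofReal_setIntegral (hf i) (ae_of_all _ (hf0 i)) (hs i),
      integral_indicator (hs i)]
  · exact fun i _ => integral_nonneg fun t => Set.indicator_nonneg (fun t _ => hf0 i t) t

theorem bhattacharyya_pi {f g : ι → α → ℝ} (hf0 : ∀ i x, 0 ≤ f i x) (hg0 : ∀ i x, 0 ≤ g i x) :
    bhattacharyya (Measure.pi fun _ => ν) (fun x => ∏ i, f i (x i)) (fun x => ∏ i, g i (x i))
      = ∏ i, bhattacharyya ν (f i) (g i) := by
  simp only [bhattacharyya, ← Finset.prod_mul_distrib]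
  simp_rw [sqrt_prod _ fun i _ => mul_nonneg (hf0 i _) (hg0 i _)]
  exact integral_fintype_prod_eq_prod fun i t => √(f i t * g i t)

end Products

section Gaussian

theorem bhattacharyya_gaussianPDFReal (m : ℝ) {a b : ℝ≥0} (ha : a ≠ 0) (hb : b ≠ 0) :
    bhattacharyya volume (gaussianPDFReal m a) (gaussianPDFReal m b)
      = √(2 * √(a * b) / (a + b)) := by
  have hA : (0 : ℝ) < a := by positivity
  have hB : (0 : ℝ) < b := by positivity
  set c : ℝ := (a + b) / (4 * a * b) with hc
  have hpoint (x : ℝ) : √(gaussianPDFReal m a x * gaussianPDFReal m b x)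
      = √((2 * π * √(a * b))⁻¹) * exp (-c * (x - m) ^ 2) := by
    rw [gaussianPDFReal, gaussianPDFReal, mul_mul_mul_comm, ← exp_add, ← mul_inv,
      ← sqrt_mul (by positivity), sqrt_mul (by positivity), ← exp_half]
    congr 2
    · rw [show 2 * π * a * (2 * π * b) = (2 * π) ^ 2 * (a * b) by ring,
        sqrt_mul (by positivity), sqrt_sq (by positivity)]
    · rw [hc]
      field_simp
      ring
  rw [bhattacharyya]
  simp_rw [hpoint]
  rw [integral_const_mul, integral_sub_right_eq_self (fun x => exp (-c * x ^ 2)) m,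
    integral_gaussian, ← sqrt_mul (by positivity)]
  congr 1
  have hab : √((a : ℝ) * b) ^ 2 = a * b := sq_sqrt (by positivity)
  have : 0 < √((a : ℝ) * b) := by positivity
  rw [hc]
  field_simp
  linear_combination -4 * hab

theorem bhattacharyya_gaussianPDFReal_le_one (m : ℝ) {a b : ℝ≥0} (ha : a ≠ 0) (hb : b ≠ 0) :
    bhattacharyya volume (gaussianPDFReal m a) (gaussianPDFReal m b) ≤ 1 :=
  bhattacharyya_le_one (integrable_gaussianPDFReal _ _) (integrable_gaussianPDFReal _ _)
    (ae_of_all _ (gaussianPDFReal_nonneg _ _)) (ae_of_all _ (gaussianPDFReal_nonneg _ _))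
    (integral_gaussianPDFReal_eq_one _ ha) (integral_gaussianPDFReal_eq_one _ hb)

theorem one_sub_bhattacharyya_gaussianPDFReal_sq_le (m : ℝ) {s : ℝ≥0} (hs : s ≠ 0) (e : ℝ≥0) :
    1 - bhattacharyya volume (gaussianPDFReal m s) (gaussianPDFReal m (s + e)) ^ 2
      ≤ (e : ℝ) ^ 2 / (8 * (s : ℝ) ^ 2) := by
  have hse : s + e ≠ 0 := fun h => hs (add_eq_zero.1 h).1
  rw [bhattacharyya_gaussianPDFReal m hs hse, sq_sqrt (by positivity), NNReal.coe_add]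
  exact one_sub_two_sqrt_mul_div_add_le (by positivity) e.coe_nonneg

variable {ι : Type*} [Fintype ι]

theorem pi_gaussianReal_eq_withDensity (m : ι → ℝ) {v : ι → ℝ≥0} (hv : ∀ i, v i ≠ 0) :
    Measure.pi (fun i => gaussianReal (m i) (v i))
      = volume.withDensity fun x => ENNReal.ofReal (∏ i, gaussianPDFReal (m i) (v i) (x i)) :=
  Measure.pi_eq_withDensity_ofReal_prod (fun _ => integrable_gaussianPDFReal _ _)
    (fun _ => gaussianPDFReal_nonneg _ _) (fun i => gaussianReal_of_var_ne_zero _ (hv i))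

theorem integral_prod_gaussianPDFReal (m : ι → ℝ) {v : ι → ℝ≥0} (hv : ∀ i, v i ≠ 0) :
    ∫ x : ι → ℝ, ∏ i, gaussianPDFReal (m i) (v i) (x i) = 1 := by
  rw [integral_fintype_prod_volume_eq_prod (fun i => gaussianPDFReal (m i) (v i))]
  exact Finset.prod_eq_one fun i _ => integral_gaussianPDFReal_eq_one _ (hv i)

theorem tvDist_pi_gaussianReal_le (m : ι → ℝ) {v w : ι → ℝ≥0} (hv : ∀ i, v i ≠ 0)
    (hw : ∀ i, w i ≠ 0) :
    tvDist (Measure.pi fun i => gaussianReal (m i) (v i))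
        (Measure.pi fun i => gaussianReal (m i) (w i))
      ≤ √(1 - ∏ i, bhattacharyya volume (gaussianPDFReal (m i) (v i))
          (gaussianPDFReal (m i) (w i)) ^ 2) := by
  have hint (u : ι → ℝ≥0) : Integrable fun x : ι → ℝ => ∏ i, gaussianPDFReal (m i) (u i) (x i) :=
    Integrable.fintype_prod fun _ => integrable_gaussianPDFReal _ _
  have hnonneg (u : ι → ℝ≥0) :
      0 ≤ᵐ[volume] fun x : ι → ℝ => ∏ i, gaussianPDFReal (m i) (u i) (x i) :=
    ae_of_all _ fun _ => Finset.prod_nonneg fun _ _ => gaussianPDFReal_nonneg _ _ _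
  rw [pi_gaussianReal_eq_withDensity m hv, pi_gaussianReal_eq_withDensity m hw, Finset.prod_pow,
    ← bhattacharyya_pi (fun _ => gaussianPDFReal_nonneg _ _) (fun _ => gaussianPDFReal_nonneg _ _)]
  exact tvDist_withDensity_ofReal_le (hint v) (hint w) (hnonneg v) (hnonneg w)
    (integral_prod_gaussianPDFReal m hv) (integral_prod_gaussianPDFReal m hw)

theorem one_sub_prod_bhattacharyya_gaussianPDFReal_sq_le (m : ι → ℝ) {s : ι → ℝ≥0}
    (hs : ∀ i, s i ≠ 0) (e : ℝ≥0) :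
    1 - ∏ i, bhattacharyya volume (gaussianPDFReal (m i) (s i))
        (gaussianPDFReal (m i) (s i + e)) ^ 2
      ≤ (e : ℝ) ^ 2 / 8 * ∑ i, 1 / (s i : ℝ) ^ 2 := by
  have hse (i : ι) : s i + e ≠ 0 := fun h => hs i (add_eq_zero.1 h).1
  refine (Finset.one_sub_prod_le_sum_one_sub _ (fun _ _ => sq_nonneg _) fun i _ =>
    pow_le_one₀ bhattacharyya_nonneg
      (bhattacharyya_gaussianPDFReal_le_one (m i) (hs i) (hse i))).trans ?_
  rw [Finset.mul_sum]
  exact Finset.sum_le_sum fun i _ =>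
    (one_sub_bhattacharyya_gaussianPDFReal_sq_le (m i) (hs i) e).trans_eq (by ring)

end Gaussian

theorem tv_gaussian_randomization (m : ℕ) (μ : Fin m → ℝ) (σ : Fin m → ℝ≥0)
    (σε : ℝ≥0) (hσ : ∀ i, 0 < σ i) :
    tvDist
      (Measure.pi fun i => gaussianReal (μ i) (σ i ^ 2))
      (Measure.pi fun i => gaussianReal (μ i) (σ i ^ 2 + σε ^ 2))
      ≤ (3 / 2) * min 1 ((σε : ℝ) ^ 2 * Real.sqrt (∑ i, 1 / (σ i : ℝ) ^ 4)) := by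
  have hv (i : Fin m) : σ i ^ 2 ≠ 0 := pow_ne_zero 2 (hσ i).ne'
  have hw (i : Fin m) : σ i ^ 2 + σε ^ 2 ≠ 0 := fun h => hv i (add_eq_zero.1 h).1
  set x := (σε : ℝ) ^ 2 * √(∑ i, 1 / (σ i : ℝ) ^ 4)
  set ρsq := ∏ i, bhattacharyya volume (gaussianPDFReal (μ i) (σ i ^ 2))
    (gaussianPDFReal (μ i) (σ i ^ 2 + σε ^ 2)) ^ 2
  have hρsq : 0 ≤ ρsq := by positivity
  have hx : 1 - ρsq ≤ x ^ 2 := by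
    refine (one_sub_prod_bhattacharyya_gaussianPDFReal_sq_le μ hv (σε ^ 2)).trans ?_
    have hS : 0 ≤ ∑ i, 1 / (σ i : ℝ) ^ 4 := by positivity
    push_cast
    simp only [← pow_mul]
    rw [mul_pow, sq_sqrt hS, ← pow_mul]
    nlinarith [mul_nonneg (pow_nonneg σε.coe_nonneg 4) hS]
  calc _ ≤ √(1 - ρsq) := tvDist_pi_gaussianReal_le μ hv hw
    _ ≤ min 1 x := le_min (sqrt_le_one.2 (by linarith)) ((sqrt_le_left (by positivity)).2 hx)
    _ ≤ _ := le_mul_of_one_le_left (le_min zero_le_one (by positivity)) (by norm_num)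
end
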